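/- arXiv:1512.01074 — 5 statements merged into one kernel-verified Lean document; each statement's English description precedes it below -/
import Mathlib

section
/- Fix γ > 0 and set η = 0. The function b ↦ γ − √(((2 − bγ)² + (bγ − 1)γ²)/(b(b+γ) − 1)), defined for b with b(b+γ) > 1 and bγ > 1, attains its maximum at b = 2/γ, with maximum value γ·(1 − √(γ²/(4 + γ²))). -/
/-!
Write `N(b) = (2 - bγ)² + (bγ - 1)γ²` and `D(b) = b(b + γ) - 1` for the numerator and denominator
of the radicand. The polynomial identity `(4 + γ²) N(b) - γ⁴ D(b) = 4 (2 - bγ)²` shows that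
`N(b) / D(b) ≥ γ⁴ / (4 + γ²)` wherever `D(b) > 0`, with equality exactly at `b = 2/γ`.
Since `√` is monotone, `λ₁ = γ - √(N / D)` is maximal there.
-/

open Real

noncomputable section

def decayRadicand (γ b : ℝ) : ℝ :=
  ((2 - b * γ) ^ 2 + (b * γ - 1) * γ ^ 2) / (b * (b + γ) - 1)

theorem decayRadicand_numerator_identity (γ b : ℝ) :
    (4 + γ ^ 2) * ((2 - b * γ) ^ 2 + (b * γ - 1) * γ ^ 2) - γ ^ 4 * (b * (b + γ) - 1)
      = 4 * (2 - b * γ) ^ 2 := by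
  ring

theorem decayRadicand_two_div (γ : ℝ) (hγ : γ ≠ 0) :
    decayRadicand γ (2 / γ) = γ ^ 2 * (γ ^ 2 / (4 + γ ^ 2)) := by
  have hD : 2 / γ * (2 / γ + γ) - 1 = (4 + γ ^ 2) / γ ^ 2 := by field_simp; ring
  rw [decayRadicand, div_mul_cancel₀ 2 hγ, hD]
  field_simp
  ring

theorem decayRadicand_lower_bound (γ b : ℝ) (hD : 0 < b * (b + γ) - 1) :
    γ ^ 2 * (γ ^ 2 / (4 + γ ^ 2)) ≤ decayRadicand γ b := by
  rw [decayRadicand, mul_div_assoc', div_le_div_iff₀ (by positivity) hD]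
  linarith [decayRadicand_numerator_identity γ b, sq_nonneg (2 - b * γ)]

theorem sub_sqrt_sq_mul {γ : ℝ} (hγ : 0 ≤ γ) (t : ℝ) :
    γ - √(γ ^ 2 * t) = γ * (1 - √t) := by
  rw [sqrt_mul (sq_nonneg γ), sqrt_sq hγ]
  ring

end

theorem lambda1_maximized_at_b_eq_two_over_gamma
    (γ : ℝ) (hγ : 0 < γ)
    (lam1 : ℝ → ℝ)
    (hlam1 : ∀ b : ℝ, lam1 b =
      γ - Real.sqrt (((2 - b * γ) ^ 2 + (b * γ - 1) * γ ^ 2) / (b * (b + γ) - 1))) :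
    (∀ b : ℝ, 1 < b * (b + γ) → 1 < b * γ → lam1 b ≤ lam1 (2 / γ)) ∧
    lam1 (2 / γ) = γ * (1 - Real.sqrt (γ ^ 2 / (4 + γ ^ 2))) := by
  have hlam : ∀ b, lam1 b = γ - √(decayRadicand γ b) := hlam1
  have hmax : lam1 (2 / γ) = γ * (1 - √(γ ^ 2 / (4 + γ ^ 2))) := by
    rw [hlam, decayRadicand_two_div γ hγ.ne', sub_sqrt_sq_mul hγ.le]
  refine ⟨fun b hD _ => ?_, hmax⟩
  have hbound := decayRadicand_lower_bound γ b (sub_pos.mpr hD)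
  rw [hmax, ← sub_sqrt_sq_mul hγ.le, hlam]
  exact sub_le_sub_left (sqrt_le_sqrt hbound) γ
end

section
/- Let γ > 0 and η = c_g + 2c_B ≥ 0 satisfy 0 < η < 1 + γ − √(1 + γ²). Then the interval ((2/(2γ − η)), (2(1 − η)/η)) for b is nonempty, i.e., 1/(2γ − η) < (1 − η)/η; equivalently the conditions b(b+γ) > 1, 2 > (2+b)η, and 2bγ > 2 + bη can be simultaneously satisfied by some b > 0. -/
open Real

theorem admissible_b_interval_nonempty
    (γ η : ℝ) (hγ : 0 < γ) (hη : 0 < η)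
    (hη' : η < 1 + γ - Real.sqrt (1 + γ ^ 2)) :
    1 / (2 * γ - η) < (1 - η) / η ∧
    ∃ b : ℝ, 0 < b ∧ 1 < b * (b + γ) ∧ (2 + b) * η < 2 ∧ 2 + b * η < 2 * b * γ := by
  have hs : Real.sqrt (1 + γ ^ 2) ^ 2 = 1 + γ ^ 2 := Real.sq_sqrt (by positivity)
  have hs0 : 0 ≤ Real.sqrt (1 + γ ^ 2) := Real.sqrt_nonneg _
  have hs1 : (1 : ℝ) ≤ Real.sqrt (1 + γ ^ 2) := by nlinarith
  have hsg : γ < Real.sqrt (1 + γ ^ 2) := by nlinarith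
  have hηγ : η < γ := by linarith
  have hη1 : η < 1 := by linarith
  have hA : 0 < 2 * γ - η := by linarith
  -- key quadratic inequality
  have hq : η ^ 2 - 2 * (1 + γ) * η + 2 * γ > 0 := by nlinarith
  have h1 : 1 / (2 * γ - η) < (1 - η) / η := by
    rw [div_lt_div_iff₀ hA hη]
    nlinarith
  refine ⟨h1, 1 / (2 * γ - η) + (1 - η) / η, ?_, ?_, ?_, ?_⟩
  · have p1 : 0 < 1 / (2 * γ - η) := div_pos one_pos hA
    have p2 : 0 < (1 - η) / η := div_pos (by linarith) hη
    linarith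
  · have hb : 2 / (2 * γ - η) < 1 / (2 * γ - η) + (1 - η) / η := by
      have : 1 / (2 * γ - η) < (1 - η) / η := h1
      have h2 : (2 : ℝ) / (2 * γ - η) = 1 / (2 * γ - η) + 1 / (2 * γ - η) := by ring
      linarith
    have hbA : 2 < (1 / (2 * γ - η) + (1 - η) / η) * (2 * γ - η) := by
      rw [div_lt_iff₀ hA] at hb
      linarith [hb]
    set b := 1 / (2 * γ - η) + (1 - η) / η with hbdef
    have hbpos : 0 < b := by
      have p1 : 0 < 1 / (2 * γ - η) := div_pos one_pos hA
      have p2 : 0 < (1 - η) / η := div_pos (by linarith) hη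
      rw [hbdef]; linarith
    nlinarith
  · have hb : 1 / (2 * γ - η) + (1 - η) / η < 2 * ((1 - η) / η) := by linarith
    have : (1 / (2 * γ - η) + (1 - η) / η) * η < 2 * ((1 - η) / η) * η := by
      exact mul_lt_mul_of_pos_right hb hη
    have he : 2 * ((1 - η) / η) * η = 2 * (1 - η) := by field_simp
    nlinarith
  · have hb : 2 / (2 * γ - η) < 1 / (2 * γ - η) + (1 - η) / η := by
      have h2 : (2 : ℝ) / (2 * γ - η) = 1 / (2 * γ - η) + 1 / (2 * γ - η) := by ring
      linarith
    rw [div_lt_iff₀ hA] at hb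
    nlinarith
end

section
/- Let γ > 0, b = 2/γ, and 0 < η < γ/(1+γ). Define λ₁ = γ − (1 + 2γ/(4 + γ²))·η − (γ/(4 + γ²))·√(4η² + (4 + γ²)(γ − η)²) and λ₂ = ((2 + γ)²/((1 + γ)(4 + γ²)))·(η/2). If additionally 0 < η ≤ 2γ/(3(1+γ)), then λ₁ > λ₂ > 0. -/
open Real

set_option maxHeartbeats 1000000 in
theorem lambda1_gt_lambda2_gt_zero
    (γ η lam1 lam2 : ℝ) (hγ : 0 < γ) (hη : 0 < η) (hη' : η < γ / (1 + γ))
    (hlam1 : lam1 = γ - (1 + 2 * γ / (4 + γ ^ 2)) * η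
      - γ / (4 + γ ^ 2) * Real.sqrt (4 * η ^ 2 + (4 + γ ^ 2) * (γ - η) ^ 2))
    (hlam2 : lam2 = (2 + γ) ^ 2 / ((1 + γ) * (4 + γ ^ 2)) * (η / 2))
    (hη'' : η ≤ 2 * γ / (3 * (1 + γ))) :
    lam2 < lam1 ∧ 0 < lam2 := by
  have h1γ : (0:ℝ) < 1 + γ := by linarith
  have h4 : (0:ℝ) < 4 + γ ^ 2 := by positivity
  have hq : 3 * (1 + γ) * η ≤ 2 * γ := by
    have := (le_div_iff₀ (by positivity : (0:ℝ) < 3 * (1 + γ))).mp hη''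
    linarith
  have ht : 0 ≤ 2*γ - 3*(1+γ)*η := by linarith
  have hlam2pos : 0 < lam2 := by rw [hlam2]; positivity
  refine ⟨?_, hlam2pos⟩
  -- L' := 2(1+γ)(4+γ²)(γ-η) - (5γ²+8γ+4)η is positive
  have hL : 0 < 2*(1+γ)*(4+γ^2)*(γ-η) - (5*γ^2+8*γ+4)*η := by
    nlinarith [mul_pos hγ hη, sq_nonneg γ, mul_nonneg (sub_nonneg.2 hq) hγ.le,
      mul_nonneg (sub_nonneg.2 hq) (sq_nonneg γ), mul_nonneg (sub_nonneg.2 hq) hη.le]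
  -- key polynomial inequality
  have hkey : 4*γ^2*(1+γ)^2 * (4*η^2 + (4+γ^2)*(γ-η)^2)
      < (2*(1+γ)*(4+γ^2)*(γ-η) - (5*γ^2+8*γ+4)*η)^2 := by
    have h9 : 0 < 9*(1+γ)^2 * ((2*(1+γ)*(4+γ^2)*(γ-η) - (5*γ^2+8*γ+4)*η)^2
        - 4*γ^2*(1+γ)^2*(4*η^2 + (4+γ^2)*(γ-η)^2)) := by
      nlinarith [pow_pos hγ 4, pow_pos hγ 5, pow_pos hγ 6, pow_pos hγ 7, pow_pos hγ 8,
        mul_nonneg ht (pow_pos hγ 2).le, mul_nonneg ht (pow_pos hγ 3).le,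
        mul_nonneg ht (pow_pos hγ 4).le, mul_nonneg ht (pow_pos hγ 5).le,
        mul_nonneg ht (pow_pos hγ 6).le, mul_nonneg ht (pow_pos hγ 7).le,
        sq_nonneg (2*γ - 3*(1+γ)*η),
        mul_nonneg (sq_nonneg (2*γ - 3*(1+γ)*η)) hγ.le,
        mul_nonneg (sq_nonneg (2*γ - 3*(1+γ)*η)) (pow_pos hγ 2).le,
        mul_nonneg (sq_nonneg (2*γ - 3*(1+γ)*η)) (pow_pos hγ 3).le,
        mul_nonneg (sq_nonneg (2*γ - 3*(1+γ)*η)) (pow_pos hγ 4).le,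
        mul_nonneg (sq_nonneg (2*γ - 3*(1+γ)*η)) (pow_pos hγ 5).le]
    nlinarith [h9, sq_nonneg (1+γ)]
  -- bound the square root
  have hs : Real.sqrt (4*η^2 + (4+γ^2)*(γ-η)^2)
      < (2*(1+γ)*(4+γ^2)*(γ-η) - (5*γ^2+8*γ+4)*η) / (2*γ*(1+γ)) := by
    rw [Real.sqrt_lt' (by positivity)]
    rw [div_pow, lt_div_iff₀ (by positivity)]
    nlinarith [hkey]
  have hcoef : 0 < γ / (4 + γ ^ 2) := by positivity
  have hident : γ / (4 + γ ^ 2) *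
      ((2*(1+γ)*(4+γ^2)*(γ-η) - (5*γ^2+8*γ+4)*η) / (2*γ*(1+γ)))
      = γ - (1 + 2 * γ / (4 + γ ^ 2)) * η
        - (2 + γ) ^ 2 / ((1 + γ) * (4 + γ ^ 2)) * (η / 2) := by
    field_simp
    ring
  have hmul := mul_lt_mul_of_pos_left hs hcoef
  rw [hident] at hmul
  rw [hlam1, hlam2]
  linarith
end

section
/- The function λ(Ĥ) = λ₁·(1 − W(λ̂·Ĥ·exp(Ĥ))/Ĥ), where λ₁ > 0, λ̂ = λ₂/λ₁ ∈ (0,1) and W is the Lambert W function, is monotone decreasing in Ĥ > 0, satisfies lim_{Ĥ → 0⁺} λ(Ĥ) = λ₁ − λ₂ > 0, and lim_{Ĥ → ∞} λ(Ĥ) = 0. -/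
/-!
Write `r(Ĥ) = W(λ̂ Ĥ e^Ĥ) / Ĥ`, so that `λ(Ĥ) = λ₁ (1 - r(Ĥ))`. The defining identity `W e^W = z`
turns into the fixed-point equation `r = λ̂ e^{(1 - r) Ĥ}`. For `λ̂ < 1` it forces `λ̂ ≤ r ≤ 1`,
and then `r` increases with `Ĥ`: if `Ĥ₁ ≤ Ĥ₂` but `r₂ < r₁`, then `(1 - r₁) Ĥ₁ ≤ (1 - r₂) Ĥ₂`,
so the right-hand side of the equation gives `r₁ ≤ r₂`. The same equation squeezes `r` between
`λ̂` and `λ̂ e^{(1 - λ̂) Ĥ}` near `0`, and between `1 + log λ̂ / Ĥ` and `1` near `∞`.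
-/

open Real Filter Set Topology

section FixedPoint

variable {L H r : ℝ}

theorem le_one_of_eq_mul_exp (hL : L ≤ 1) (hH : 0 ≤ H) (hr : r = L * exp ((1 - r) * H)) :
    r ≤ 1 := by
  by_contra! h
  have hexp : exp ((1 - r) * H) ≤ 1 :=
    exp_le_one_iff.2 (mul_nonpos_of_nonpos_of_nonneg (by linarith) hH)
  nlinarith [exp_pos ((1 - r) * H)]

theorem le_of_eq_mul_exp (hL : 0 ≤ L) (hH : 0 ≤ H) (hr1 : r ≤ 1)
    (hr : r = L * exp ((1 - r) * H)) : L ≤ r := by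
  rw [hr]
  exact le_mul_of_one_le_right hL (one_le_exp (mul_nonneg (by linarith) hH))

theorem le_mul_exp_of_eq_mul_exp (hL : 0 ≤ L) (hH : 0 ≤ H) (hLr : L ≤ r)
    (hr : r = L * exp ((1 - r) * H)) : r ≤ L * exp ((1 - L) * H) := by
  rw [hr]
  gcongr

theorem one_sub_le_neg_log_div_of_eq_mul_exp (hL : 0 < L) (hH : 0 < H) (hr1 : r ≤ 1)
    (hr : r = L * exp ((1 - r) * H)) : 1 - r ≤ -log L / H := by
  rw [le_div_iff₀ hH, ← log_inv, le_log_iff_exp_le (inv_pos.2 hL), ← one_div, le_div_iff₀ hL]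
  calc exp ((1 - r) * H) * L = r := by rw [mul_comm, ← hr]
    _ ≤ 1 := hr1

theorem le_of_eq_mul_exp_of_le {H₁ H₂ r₁ r₂ : ℝ} (hL : 0 ≤ L) (hH₁ : 0 ≤ H₁) (hH : H₁ ≤ H₂)
    (hr₁1 : r₁ ≤ 1) (hr₁ : r₁ = L * exp ((1 - r₁) * H₁)) (hr₂ : r₂ = L * exp ((1 - r₂) * H₂)) :
    r₁ ≤ r₂ := by
  by_contra! h
  have hexp : (1 - r₁) * H₁ ≤ (1 - r₂) * H₂ :=
    mul_le_mul (by linarith) hH hH₁ (by linarith)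
  have : r₁ ≤ r₂ := by rw [hr₁, hr₂]; gcongr
  linarith

end FixedPoint

section RatioFunction

variable {L : ℝ} {r : ℝ → ℝ}

theorem monotoneOn_of_eq_mul_exp (hL : 0 ≤ L) (hL1 : L ≤ 1)
    (hr : ∀ H, 0 < H → r H = L * exp ((1 - r H) * H)) : MonotoneOn r (Ioi 0) :=
  fun _ ha _ hb hab => le_of_eq_mul_exp_of_le hL (le_of_lt ha) hab
    (le_one_of_eq_mul_exp hL1 (le_of_lt ha) (hr _ ha)) (hr _ ha) (hr _ hb)

theorem tendsto_nhdsGT_zero_of_eq_mul_exp (hL : 0 ≤ L) (hL1 : L ≤ 1)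
    (hr : ∀ H, 0 < H → r H = L * exp ((1 - r H) * H)) : Tendsto r (𝓝[>] 0) (𝓝 L) := by
  have hupper : Tendsto (fun H => L * exp ((1 - L) * H)) (𝓝[>] 0) (𝓝 L) := by
    have hcont : Continuous fun H => L * exp ((1 - L) * H) := by fun_prop
    simpa using (hcont.tendsto 0).mono_left nhdsWithin_le_nhds
  have hbounds : ∀ᶠ H in 𝓝[>] 0, L ≤ r H ∧ r H ≤ L * exp ((1 - L) * H) := by
    filter_upwards [self_mem_nhdsWithin] with H (hH : 0 < H)
    have hr1 := le_one_of_eq_mul_exp hL1 hH.le (hr H hH)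
    have hLr := le_of_eq_mul_exp hL hH.le hr1 (hr H hH)
    exact ⟨hLr, le_mul_exp_of_eq_mul_exp hL hH.le hLr (hr H hH)⟩
  exact tendsto_of_tendsto_of_tendsto_of_le_of_le' tendsto_const_nhds hupper
    (hbounds.mono fun _ => And.left) (hbounds.mono fun _ => And.right)

theorem tendsto_atTop_of_eq_mul_exp (hL : 0 < L) (hL1 : L ≤ 1)
    (hr : ∀ H, 0 < H → r H = L * exp ((1 - r H) * H)) : Tendsto r atTop (𝓝 1) := by
  have hlower : Tendsto (fun H => 1 - -log L / H) atTop (𝓝 1) := by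
    have hdecay : Tendsto (fun H : ℝ => -log L / H) atTop (𝓝 0) :=
      tendsto_const_nhds.div_atTop tendsto_id
    simpa using hdecay.const_sub 1
  have hbounds : ∀ᶠ H in atTop, 1 - -log L / H ≤ r H ∧ r H ≤ 1 := by
    filter_upwards [eventually_gt_atTop 0] with H hH
    have hr1 := le_one_of_eq_mul_exp hL1 hH.le (hr H hH)
    exact ⟨by linarith [one_sub_le_neg_log_div_of_eq_mul_exp hL hH hr1 (hr H hH)], hr1⟩
  exact tendsto_of_tendsto_of_tendsto_of_le_of_le' hlower tendsto_const_nhds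
    (hbounds.mono fun _ => And.left) (hbounds.mono fun _ => And.right)

end RatioFunction

theorem div_eq_mul_exp_of_mul_exp_eq {L H w : ℝ} (hH : 0 < H) (hw : w * exp w = L * H * exp H) :
    w / H = L * exp ((1 - w / H) * H) := by
  rw [show (1 - w / H) * H = H - w by field_simp, exp_sub]
  field_simp
  linarith

theorem decay_rate_monotone_in_delay
    (lam1 lam2 : ℝ) (h1 : 0 < lam2) (h2 : lam2 < lam1)
    (W : ℝ → ℝ)
    (hW : ∀ z : ℝ, 0 ≤ z → W z * Real.exp (W z) = z ∧ 0 ≤ W z)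
    (lam : ℝ → ℝ)
    (hlam : ∀ H : ℝ, 0 < H →
      lam H = lam1 * (1 - W (lam2 / lam1 * H * Real.exp H) / H)) :
    AntitoneOn lam (Ioi 0) ∧
    0 < lam1 - lam2 ∧
    Tendsto lam (nhdsWithin 0 (Ioi 0)) (nhds (lam1 - lam2)) ∧
    Tendsto lam atTop (nhds 0) := by
  have hlam1 : 0 < lam1 := h1.trans h2
  set L := lam2 / lam1
  have hL : 0 < L := div_pos h1 hlam1
  have hL1 : L ≤ 1 := (div_le_one hlam1).2 h2.le
  set r : ℝ → ℝ := fun H => W (L * H * exp H) / H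
  have hr : ∀ H, 0 < H → r H = L * exp ((1 - r H) * H) := fun H hH =>
    div_eq_mul_exp_of_mul_exp_eq hH (hW _ (by positivity)).1
  have hlam_eq : EqOn (fun H => lam1 * (1 - r H)) lam (Ioi 0) := fun H hH => (hlam H hH).symm
  have hlimit : lam1 * (1 - L) = lam1 - lam2 := by
    simp only [L]; field_simp
  refine ⟨?_, by linarith, ?_, ?_⟩
  · intro a ha b hb hab
    rw [← hlam_eq ha, ← hlam_eq hb]
    dsimp only
    gcongr
    exact monotoneOn_of_eq_mul_exp hL.le hL1 hr ha hb hab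
  · refine Tendsto.congr' (eventuallyEq_nhdsWithin_of_eqOn hlam_eq) ?_
    rw [← hlimit]
    exact ((tendsto_nhdsGT_zero_of_eq_mul_exp hL.le hL1 hr).const_sub 1).const_mul lam1
  · refine Tendsto.congr' (eventuallyEq_of_mem (Ioi_mem_atTop 0) hlam_eq) ?_
    simpa using ((tendsto_atTop_of_eq_mul_exp hL hL1 hr).const_sub 1).const_mul lam1
end

section
/- In the Picard iteration estimate with logarithmic kernel g(t, s) = ln(t) − ln(s), the iterated integral satisfies ∫₀ᵗ g(t,t₁) ∫₀^{t₁} g(t₁,t₂) ⋯ ∫₀^{t_{k−1}} g(t_{k−1},t_k) dt_k ⋯ dt₁ ≤ tᵏ/k! for all t > 0 and k ≥ 1. -/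
open Real intervalIntegral

/-- Iterated integral with logarithmic kernel `g(t,s) = ln t − ln s`:
`I 0 t = 1`, `I (k+1) t = ∫₀ᵗ (ln t − ln s) · I k s ds`. -/
noncomputable def iterLogInt : ℕ → ℝ → ℝ
  | 0, _ => 1
  | k + 1, t => ∫ s in (0 : ℝ)..t, (Real.log t - Real.log s) * iterLogInt k s

/- The iterated integral has the closed form `tᵏ / (k!)²`: the one-step identity
`∫₀ᵗ (ln t − ln s) sᵏ ds = tᵏ⁺¹ / (k+1)²` turns the recursion into `(k!)² ↦ ((k+1)!)²`,
and `(k!)² ≥ k!`. Since Lean's `log` is `log |·|`, the closed form even holds for negative `t`. -/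

-- `sᵏ⁺¹ log s` is written as `sᵏ (s log s)` so that the primitive is visibly continuous at `0`.
lemma hasDerivAt_log_kernel_primitive (c : ℝ) (k : ℕ) {x : ℝ} (hx : x ≠ 0) :
    HasDerivAt (fun s : ℝ => (c * s ^ (k + 1) - s ^ k * (s * log s)) / (k + 1)
      + s ^ (k + 1) / ((k : ℝ) + 1) ^ 2) ((c - log x) * x ^ k) x := by
  have hpow := hasDerivAt_pow (k + 1) x
  have hprim := (((hpow.const_mul c).sub ((hasDerivAt_pow k x).mul (hasDerivAt_mul_log hx))).div_const
    ((k : ℝ) + 1)).add (hpow.div_const (((k : ℝ) + 1) ^ 2))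
  refine hprim.congr_deriv ?_
  have hk : (k : ℝ) + 1 ≠ 0 := by positivity
  rcases k with _ | k
  · simp only [pow_zero, mul_one, zero_add, Nat.cast_one, tsub_self, CharP.cast_eq_zero, zero_mul,
      one_mul, div_one, one_pow]
    ring
  · simp only [Nat.add_sub_cancel]
    push_cast
    field_simp
    ring

lemma integral_log_sub_log_mul_pow (t : ℝ) (k : ℕ) :
    ∫ s in (0 : ℝ)..t, (log t - log s) * s ^ k = t ^ (k + 1) / ((k : ℝ) + 1) ^ 2 := by
  have hint : IntervalIntegrable (fun s : ℝ => (log t - log s) * s ^ k) MeasureTheory.volume 0 t :=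
    (intervalIntegrable_const.sub intervalIntegrable_log').mul_continuousOn
      (continuous_pow k).continuousOn
  -- `0` is an endpoint, so the primitive is only differentiated away from the singularity of `log`.
  rw [integral_eq_sub_of_hasDeriv_right (by fun_prop)
    (fun x hx => (hasDerivAt_log_kernel_primitive (log t) k
      (ne_of_mem_of_not_mem hx (by simpa using le_of_lt))).hasDerivWithinAt) hint]
  have hk : (k : ℝ) + 1 ≠ 0 := by positivity
  simp only [log_zero]
  field_simp
  ring

lemma iterLogInt_eq (k : ℕ) (t : ℝ) : iterLogInt k t = t ^ k / (k.factorial : ℝ) ^ 2 := by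
  induction k generalizing t with
  | zero => simp [iterLogInt]
  | succ k ih =>
    simp only [iterLogInt, ih, mul_div_assoc', integral_div, integral_log_sub_log_mul_pow,
      Nat.factorial_succ]
    push_cast
    field_simp

theorem iterated_log_integral_bound_general (t : ℝ) (ht : 0 < t) (k : ℕ) :
    iterLogInt k t ≤ t ^ k / (Nat.factorial k : ℝ) := by
  rw [iterLogInt_eq]
  have hfact : (1 : ℝ) ≤ k.factorial := by exact_mod_cast k.factorial_pos
  exact div_le_div_of_nonneg_left (by positivity) (by positivity) (by nlinarith)

theorem iterated_log_integral_bound (t : ℝ) (ht : 0 < t) (k : ℕ) (hk : 1 ≤ k) :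
    iterLogInt k t ≤ t ^ k / (Nat.factorial k : ℝ) :=
  iterated_log_integral_bound_general t ht k
end
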